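/- Let U ↔ X ↔ (Y_1, Y_2) be a Markov chain of random variables where Y_2 is a degraded version of Y_1 given X, i.e., X ↔ Y_1 ↔ Y_2 is also a Markov chain. Then I(X; Y_1 | U) + I(U; Y_2) ≤ I(X; Y_1). -/
import Mathlib


noncomputable def plog (x : ℝ) : ℝ := x * Real.log x

lemma klterm {p q : ℝ} (hp : 0 ≤ p) (hq : 0 ≤ q) (h : p ≠ 0 → q ≠ 0) :
    p * Real.log q ≤ plog p + (q - p) := by
  unfold plog
  rcases eq_or_lt_of_le hp with h0 | hp'
  · simp [← h0, hq]
  · have hq' : 0 < q := lt_of_le_of_ne hq (Ne.symm (h hp'.ne'))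
    have h1 := Real.log_le_sub_one_of_pos (div_pos hq' hp')
    rw [Real.log_div hq'.ne' hp'.ne'] at h1
    have h2 : q / p - 1 = (q - p) / p := by field_simp
    rw [h2] at h1
    have := mul_le_mul_of_nonneg_left h1 hp'.le
    rw [mul_div_cancel₀ _ hp'.ne'] at this
    linarith [this]

section
variable {A B C : Type*} [Fintype A] [Fintype B] [Fintype C]

lemma factA (q : A → B → C → ℝ) (hq : ∀ a b c, 0 ≤ q a b c)
    (hM : ∀ a b c, q a b c * (∑ a', ∑ c', q a' b c') = (∑ c', q a b c') * (∑ a', q a' b c)) :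
    ∑ a, ∑ b, ∑ c, plog (q a b c)
      = (∑ a, ∑ b, plog (∑ c, q a b c)) + (∑ b, ∑ c, plog (∑ a, q a b c))
        - ∑ b, plog (∑ a, ∑ c, q a b c) := by
  have key : ∀ a b c, plog (q a b c)
      = q a b c * Real.log (∑ c', q a b c') + q a b c * Real.log (∑ a', q a' b c)
        - q a b c * Real.log (∑ a', ∑ c', q a' b c') := by
    intro a b c
    rcases eq_or_lt_of_le (hq a b c) with h0 | hpos
    · simp [plog, ← h0]
    · have hAB : 0 < ∑ c', q a b c' :=
        lt_of_lt_of_le hpos (Finset.single_le_sum (fun c' _ => hq a b c') (Finset.mem_univ c))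
      have hBC : 0 < ∑ a', q a' b c :=
        lt_of_lt_of_le hpos (Finset.single_le_sum (fun a' _ => hq a' b c) (Finset.mem_univ a))
      have hB : 0 < ∑ a', ∑ c', q a' b c' :=
        lt_of_lt_of_le hAB (Finset.single_le_sum
          (fun a' _ => Finset.sum_nonneg fun c' _ => hq a' b c') (Finset.mem_univ a))
      have hval : q a b c = (∑ c', q a b c') * (∑ a', q a' b c) / (∑ a', ∑ c', q a' b c') := by
        rw [eq_div_iff hB.ne']
        exact hM a b c
      have hlog : Real.log (q a b c)
          = Real.log (∑ c', q a b c') + Real.log (∑ a', q a' b c)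
            - Real.log (∑ a', ∑ c', q a' b c') := by
        rw [hval, Real.log_div (by positivity) hB.ne', Real.log_mul hAB.ne' hBC.ne']
      unfold plog; rw [hlog]; ring
  calc ∑ a, ∑ b, ∑ c, plog (q a b c)
      = ∑ a, ∑ b, ∑ c, (q a b c * Real.log (∑ c', q a b c')
          + q a b c * Real.log (∑ a', q a' b c)
          - q a b c * Real.log (∑ a', ∑ c', q a' b c')) := by
        refine Finset.sum_congr rfl fun a _ => Finset.sum_congr rfl fun b _ =>
          Finset.sum_congr rfl fun c _ => key a b c
    _ = (∑ a, ∑ b, ∑ c, q a b c * Real.log (∑ c', q a b c'))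
        + (∑ a, ∑ b, ∑ c, q a b c * Real.log (∑ a', q a' b c))
        - ∑ a, ∑ b, ∑ c, q a b c * Real.log (∑ a', ∑ c', q a' b c') := by
        simp [Finset.sum_add_distrib, Finset.sum_sub_distrib]
    _ = (∑ a, ∑ b, plog (∑ c, q a b c)) + (∑ b, ∑ c, plog (∑ a, q a b c))
        - ∑ b, plog (∑ a, ∑ c, q a b c) := by
        congr 1; congr 1
        · exact Finset.sum_congr rfl fun a _ => Finset.sum_congr rfl fun b _ => by
            rw [← Finset.sum_mul]; rfl
        · rw [Finset.sum_comm]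
          refine Finset.sum_congr rfl fun b _ => ?_
          rw [Finset.sum_comm]
          refine Finset.sum_congr rfl fun c _ => ?_
          rw [← Finset.sum_mul]; rfl
        · rw [Finset.sum_comm]
          refine Finset.sum_congr rfl fun b _ => ?_
          unfold plog
          rw [Finset.sum_mul]
          refine Finset.sum_congr rfl fun a _ => ?_
          rw [← Finset.sum_mul]
end

section
variable {A B C : Type*} [Fintype A] [Fintype B] [Fintype C]

lemma comm3 (f : A → B → C → ℝ) :
    ∑ a, ∑ b, ∑ c, f a b c = ∑ c, ∑ a, ∑ b, f a b c := by
  have h1 : ∀ a : A, (∑ b, ∑ c, f a b c) = ∑ c, ∑ b, f a b c := fun a => Finset.sum_comm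
  rw [Finset.sum_congr rfl fun a _ => h1 a]
  exact Finset.sum_comm

lemma factB (q : A → B → C → ℝ) (hq : ∀ a b c, 0 ≤ q a b c) :
    (∑ a, ∑ c, plog (∑ b, q a b c)) + (∑ b, ∑ c, plog (∑ a, q a b c))
      ≤ (∑ a, ∑ b, ∑ c, plog (q a b c)) + ∑ c, plog (∑ a, ∑ b, q a b c) := by
  set qAC : A → C → ℝ := fun a c => ∑ b, q a b c with hqAC
  set qBC : B → C → ℝ := fun b c => ∑ a, q a b c with hqBC
  set qC : C → ℝ := fun c => ∑ a, ∑ b, q a b c with hqC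
  have hqACn : ∀ a c, 0 ≤ qAC a c := fun a c => Finset.sum_nonneg fun b _ => hq a b c
  have hqBCn : ∀ b c, 0 ≤ qBC b c := fun b c => Finset.sum_nonneg fun a _ => hq a b c
  have hqCn : ∀ c, 0 ≤ qC c := fun c => Finset.sum_nonneg fun a _ => hqACn a c
  have hCBC : ∀ c, (∑ b, qBC b c) = qC c := fun c => Finset.sum_comm
  set Q : A → B → C → ℝ := fun a b c => if qC c = 0 then 0 else qAC a c * qBC b c / qC c with hQ
  have hpos : ∀ a b c, 0 < q a b c → 0 < qAC a c ∧ 0 < qBC b c ∧ 0 < qC c := by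
    intro a b c h
    have h1 : 0 < qAC a c :=
      lt_of_lt_of_le h (Finset.single_le_sum (fun b' _ => hq a b' c) (Finset.mem_univ b))
    have h2 : 0 < qBC b c :=
      lt_of_lt_of_le h (Finset.single_le_sum (fun a' _ => hq a' b c) (Finset.mem_univ a))
    have h3 : 0 < qC c :=
      lt_of_lt_of_le h1 (Finset.single_le_sum (fun a' _ => hqACn a' c) (Finset.mem_univ a))
    exact ⟨h1, h2, h3⟩
  have hQsum : (∑ a, ∑ b, ∑ c, Q a b c) ≤ ∑ a, ∑ b, ∑ c, q a b c := by
    rw [comm3 Q, comm3 q]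
    refine Finset.sum_le_sum fun c _ => ?_
    rcases eq_or_ne (qC c) 0 with h0 | h0
    · simp [hQ, h0]
      exact hqCn c
    · have heq : (∑ a, ∑ b, Q a b c) = qC c := by
        have hb : ∀ a, (∑ b, Q a b c) = qAC a c * qC c / qC c := by
          intro a
          simp only [hQ, h0, if_false]
          rw [← Finset.sum_div, ← Finset.mul_sum, hCBC]
        rw [Finset.sum_congr rfl fun a _ => hb a, ← Finset.sum_div, ← Finset.sum_mul]
        rw [mul_div_assoc, div_self h0, mul_one]
      rw [heq]
  have hKL : (∑ a, ∑ b, ∑ c, q a b c * Real.log (Q a b c))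
      ≤ (∑ a, ∑ b, ∑ c, plog (q a b c))
        + ((∑ a, ∑ b, ∑ c, Q a b c) - ∑ a, ∑ b, ∑ c, q a b c) := by
    have hterm : ∀ a b c, q a b c * Real.log (Q a b c) ≤ plog (q a b c) + (Q a b c - q a b c) := by
      intro a b c
      refine klterm (hq a b c) ?_ ?_
      · rcases eq_or_ne (qC c) 0 with h0 | h0
        · simp [hQ, h0]
        · simp only [hQ, h0, if_false]
          exact div_nonneg (mul_nonneg (hqACn a c) (hqBCn b c)) (hqCn c)
      · intro hne
        obtain ⟨h1, h2, h3⟩ := hpos a b c (lt_of_le_of_ne (hq a b c) (Ne.symm hne))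
        simp only [hQ, h3.ne', if_false]
        exact (div_pos (mul_pos h1 h2) h3).ne'
    calc (∑ a, ∑ b, ∑ c, q a b c * Real.log (Q a b c))
        ≤ ∑ a, ∑ b, ∑ c, (plog (q a b c) + (Q a b c - q a b c)) := by
          refine Finset.sum_le_sum fun a _ => Finset.sum_le_sum fun b _ =>
            Finset.sum_le_sum fun c _ => hterm a b c
      _ = _ := by simp [Finset.sum_add_distrib, Finset.sum_sub_distrib]
  have hexp : ∀ a b c, q a b c * Real.log (Q a b c)
      = q a b c * Real.log (qAC a c) + q a b c * Real.log (qBC b c)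
        - q a b c * Real.log (qC c) := by
    intro a b c
    rcases eq_or_lt_of_le (hq a b c) with h0 | hp'
    · simp [← h0]
    · obtain ⟨h1, h2, h3⟩ := hpos a b c hp'
      simp only [hQ, h3.ne', if_false]
      rw [Real.log_div (mul_pos h1 h2).ne' h3.ne', Real.log_mul h1.ne' h2.ne']
      ring
  have m1 : (∑ a, ∑ b, ∑ c, q a b c * Real.log (qAC a c)) = ∑ a, ∑ c, plog (qAC a c) := by
    refine Finset.sum_congr rfl fun a _ => ?_
    rw [Finset.sum_comm]
    exact Finset.sum_congr rfl fun c _ => by rw [← Finset.sum_mul]; rfl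
  have m2 : (∑ a, ∑ b, ∑ c, q a b c * Real.log (qBC b c)) = ∑ b, ∑ c, plog (qBC b c) := by
    rw [Finset.sum_comm]
    refine Finset.sum_congr rfl fun b _ => ?_
    rw [Finset.sum_comm]
    exact Finset.sum_congr rfl fun c _ => by rw [← Finset.sum_mul]; rfl
  have m3 : (∑ a, ∑ b, ∑ c, q a b c * Real.log (qC c)) = ∑ c, plog (qC c) := by
    rw [comm3]
    refine Finset.sum_congr rfl fun c _ => ?_
    unfold plog
    rw [Finset.sum_mul]
    exact Finset.sum_congr rfl fun a _ => by rw [← Finset.sum_mul]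
  have hsplit : (∑ a, ∑ b, ∑ c, q a b c * Real.log (Q a b c))
      = (∑ a, ∑ c, plog (qAC a c)) + (∑ b, ∑ c, plog (qBC b c)) - ∑ c, plog (qC c) := by
    calc (∑ a, ∑ b, ∑ c, q a b c * Real.log (Q a b c))
        = ∑ a, ∑ b, ∑ c, (q a b c * Real.log (qAC a c) + q a b c * Real.log (qBC b c)
            - q a b c * Real.log (qC c)) := by
          refine Finset.sum_congr rfl fun a _ => Finset.sum_congr rfl fun b _ =>
            Finset.sum_congr rfl fun c _ => hexp a b c
      _ = (∑ a, ∑ b, ∑ c, q a b c * Real.log (qAC a c))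
          + (∑ a, ∑ b, ∑ c, q a b c * Real.log (qBC b c))
          - ∑ a, ∑ b, ∑ c, q a b c * Real.log (qC c) := by
          simp [Finset.sum_add_distrib, Finset.sum_sub_distrib]
      _ = _ := by rw [m1, m2, m3]
  linarith [hKL, hQsum, hsplit]

end


/-- Shannon entropy (base 2) of a pmf on a finite type. -/
noncomputable def Hent {γ : Type*} [Fintype γ] (f : γ → ℝ) : ℝ :=
  ∑ x, -(f x * Real.logb 2 (f x))

lemma HentS {γ : Type*} [Fintype γ] (f : γ → ℝ) :
    Hent f = -(∑ x, plog (f x)) / Real.log 2 := by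
  unfold Hent plog Real.logb
  rw [neg_div, Finset.sum_div, ← Finset.sum_neg_distrib]
  apply Finset.sum_congr rfl; intro x _; ring


/-- If `U ↔ X ↔ (Y₁,Y₂)` is a Markov chain and `X ↔ Y₁ ↔ Y₂` is also a Markov
chain (Y₂ degraded w.r.t. Y₁), then `I(X;Y₁|U) + I(U;Y₂) ≤ I(X;Y₁)`, where mutual
informations are expressed through Shannon entropies of the corresponding marginals of the
joint pmf `p` on `𝒰 × 𝒳 × 𝒴₁ × 𝒴₂`. -/
theorem degraded_mutual_information_bound
    {𝒰 𝒳 𝒴₁ 𝒴₂ : Type*} [Fintype 𝒰] [Fintype 𝒳] [Fintype 𝒴₁] [Fintype 𝒴₂]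
    (p : 𝒰 → 𝒳 → 𝒴₁ → 𝒴₂ → ℝ)
    (hp0 : ∀ u x y₁ y₂, 0 ≤ p u x y₁ y₂)
    (hp1 : ∑ u, ∑ x, ∑ y₁, ∑ y₂, p u x y₁ y₂ = 1)
    -- Markov chain U ↔ X ↔ (Y₁,Y₂):  p(u,x,y₁,y₂) pX(x) = pUX(u,x) pXY₁Y₂(x,y₁,y₂)
    (hMarkovU : ∀ u x y₁ y₂,
      p u x y₁ y₂ * (∑ u', ∑ a, ∑ b, p u' x a b)
        = (∑ a, ∑ b, p u x a b) * (∑ u', p u' x y₁ y₂))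
    -- Markov chain X ↔ Y₁ ↔ Y₂:  pXY₁Y₂(x,y₁,y₂) pY₁(y₁) = pXY₁(x,y₁) pY₁Y₂(y₁,y₂)
    (hMarkovDeg : ∀ x y₁ y₂,
      (∑ u, p u x y₁ y₂) * (∑ u, ∑ x', ∑ b, p u x' y₁ b)
        = (∑ u, ∑ b, p u x y₁ b) * (∑ u, ∑ x', p u x' y₁ y₂)) :
    -- I(X;Y₁|U) = H(U,X) + H(U,Y₁) − H(U) − H(U,X,Y₁),  I(U;Y₂) = H(U)+H(Y₂)−H(U,Y₂),
    -- I(X;Y₁) = H(X) + H(Y₁) − H(X,Y₁)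
    (Hent (fun ux : 𝒰 × 𝒳 => ∑ a, ∑ b, p ux.1 ux.2 a b)
      + Hent (fun uy : 𝒰 × 𝒴₁ => ∑ x, ∑ b, p uy.1 x uy.2 b)
      - Hent (fun u : 𝒰 => ∑ x, ∑ a, ∑ b, p u x a b)
      - Hent (fun uxy : 𝒰 × 𝒳 × 𝒴₁ => ∑ b, p uxy.1 uxy.2.1 uxy.2.2 b))
    + (Hent (fun u : 𝒰 => ∑ x, ∑ a, ∑ b, p u x a b)
      + Hent (fun y₂ : 𝒴₂ => ∑ u, ∑ x, ∑ a, p u x a y₂)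
      - Hent (fun uy : 𝒰 × 𝒴₂ => ∑ x, ∑ a, p uy.1 x a uy.2))
    ≤ Hent (fun x : 𝒳 => ∑ u, ∑ a, ∑ b, p u x a b)
      + Hent (fun y₁ : 𝒴₁ => ∑ u, ∑ x, ∑ b, p u x y₁ b)
      - Hent (fun xy : 𝒳 × 𝒴₁ => ∑ u, ∑ b, p u xy.1 xy.2 b) := by
  have hL : (0:ℝ) < Real.log 2 := Real.log_pos one_lt_two
  -- zero extraction
  have hzero : ∀ x, (∑ u', ∑ a, ∑ b, p u' x a b) = 0 → ∀ u a b, p u x a b = 0 := by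
    intro x h u a b
    have h1 := (Finset.sum_eq_zero_iff_of_nonneg (fun u' _ => Finset.sum_nonneg fun a _ =>
      Finset.sum_nonneg fun b _ => hp0 u' x a b)).mp h u (Finset.mem_univ u)
    have h2 := (Finset.sum_eq_zero_iff_of_nonneg (fun a _ =>
      Finset.sum_nonneg fun b _ => hp0 u x a b)).mp h1 a (Finset.mem_univ a)
    exact (Finset.sum_eq_zero_iff_of_nonneg (fun b _ => hp0 u x a b)).mp h2 b (Finset.mem_univ b)
  -- Markov for q(u,x,y₁) = ∑ b, p u x y₁ b
  have hMq : ∀ u x y₁, (∑ b, p u x y₁ b) * (∑ u', ∑ a, ∑ b, p u' x a b)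
      = (∑ a, ∑ b, p u x a b) * (∑ u', ∑ b, p u' x y₁ b) := by
    intro u x y₁
    have h : ∑ y₂, (p u x y₁ y₂ * (∑ u', ∑ a, ∑ b, p u' x a b))
        = ∑ y₂, ((∑ a, ∑ b, p u x a b) * (∑ u', p u' x y₁ y₂)) :=
      Finset.sum_congr rfl fun y₂ _ => hMarkovU u x y₁ y₂
    rw [← Finset.sum_mul, ← Finset.mul_sum] at h
    rw [h]
    congr 1
    exact Finset.sum_comm
  -- pointwise-in-x Markov chain U ↔ Y₁ ↔ Y₂
  have step1 : ∀ u x y₁ y₂, p u x y₁ y₂ * (∑ u', ∑ x', ∑ b, p u' x' y₁ b)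
      = (∑ b, p u x y₁ b) * (∑ u', ∑ x', p u' x' y₁ y₂) := by
    intro u x y₁ y₂
    rcases eq_or_ne (∑ u', ∑ a, ∑ b, p u' x a b) 0 with h0 | h0
    · have hz := hzero x h0
      rw [hz u y₁ y₂, Finset.sum_eq_zero fun b _ => hz u y₁ b]
      simp
    · apply mul_left_cancel₀ h0
      calc (∑ u', ∑ a, ∑ b, p u' x a b) * (p u x y₁ y₂ * (∑ u', ∑ x', ∑ b, p u' x' y₁ b))
          = (p u x y₁ y₂ * (∑ u', ∑ a, ∑ b, p u' x a b)) * (∑ u', ∑ x', ∑ b, p u' x' y₁ b) := by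
            ring
        _ = ((∑ a, ∑ b, p u x a b) * (∑ u', p u' x y₁ y₂)) * (∑ u', ∑ x', ∑ b, p u' x' y₁ b) := by
            rw [hMarkovU u x y₁ y₂]
        _ = (∑ a, ∑ b, p u x a b) * ((∑ u', p u' x y₁ y₂) * (∑ u', ∑ x', ∑ b, p u' x' y₁ b)) := by
            ring
        _ = (∑ a, ∑ b, p u x a b) * ((∑ u', ∑ b, p u' x y₁ b) * (∑ u', ∑ x', p u' x' y₁ y₂)) := by
            rw [hMarkovDeg x y₁ y₂]
        _ = ((∑ a, ∑ b, p u x a b) * (∑ u', ∑ b, p u' x y₁ b)) * (∑ u', ∑ x', p u' x' y₁ y₂) := by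
            ring
        _ = ((∑ b, p u x y₁ b) * (∑ u', ∑ a, ∑ b, p u' x a b)) * (∑ u', ∑ x', p u' x' y₁ y₂) := by
            rw [hMq u x y₁]
        _ = (∑ u', ∑ a, ∑ b, p u' x a b) * ((∑ b, p u x y₁ b) * (∑ u', ∑ x', p u' x' y₁ y₂)) := by
            ring
  -- Markov for r(u,y₁,y₂) = ∑ x, p u x y₁ y₂  (chain U ↔ Y₁ ↔ Y₂)
  have hMr : ∀ u y₁ y₂, (∑ x, p u x y₁ y₂) * (∑ u', ∑ y₂', ∑ x, p u' x y₁ y₂')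
      = (∑ y₂', ∑ x, p u x y₁ y₂') * (∑ u', ∑ x, p u' x y₁ y₂) := by
    intro u y₁ y₂
    have h : ∑ x, (p u x y₁ y₂ * (∑ u', ∑ x', ∑ b, p u' x' y₁ b))
        = ∑ x, ((∑ b, p u x y₁ b) * (∑ u', ∑ x', p u' x' y₁ y₂)) :=
      Finset.sum_congr rfl fun x _ => step1 u x y₁ y₂
    rw [← Finset.sum_mul, ← Finset.sum_mul] at h
    have e1 : (∑ u', ∑ y₂', ∑ x, p u' x y₁ y₂') = ∑ u', ∑ x', ∑ b, p u' x' y₁ b :=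
      Finset.sum_congr rfl fun u' _ => Finset.sum_comm
    have e2 : (∑ y₂', ∑ x, p u x y₁ y₂') = ∑ x, ∑ b, p u x y₁ b := Finset.sum_comm
    rw [e1, e2, h]
  -- the three entropy facts
  have SA1 := factA (fun u x y₁ => ∑ b, p u x y₁ b)
    (fun u x y₁ => Finset.sum_nonneg fun b _ => hp0 u x y₁ b) hMq
  have SA2 := factA (fun u y₁ y₂ => ∑ x, p u x y₁ y₂)
    (fun u y₁ y₂ => Finset.sum_nonneg fun x _ => hp0 u x y₁ y₂) hMr
  have SB := factB (fun u y₁ y₂ => ∑ x, p u x y₁ y₂)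
    (fun u y₁ y₂ => Finset.sum_nonneg fun x _ => hp0 u x y₁ y₂)
  -- marginal alignment equalities
  have gUY1 : (∑ u, ∑ y₁, plog (∑ y₂, ∑ x, p u x y₁ y₂))
      = ∑ u, ∑ y₁, plog (∑ x, ∑ b, p u x y₁ b) := by
    refine Finset.sum_congr rfl fun u _ => Finset.sum_congr rfl fun y₁ _ => ?_
    rw [Finset.sum_comm]
  have gY1 : (∑ y₁, plog (∑ u, ∑ y₂, ∑ x, p u x y₁ y₂))
      = ∑ y₁, plog (∑ u, ∑ x, ∑ b, p u x y₁ b) := by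
    refine Finset.sum_congr rfl fun y₁ _ => ?_
    congr 1
    exact Finset.sum_congr rfl fun u _ => Finset.sum_comm
  have gUY2 : (∑ u, ∑ y₂, plog (∑ y₁, ∑ x, p u x y₁ y₂))
      = ∑ u, ∑ y₂, plog (∑ x, ∑ a, p u x a y₂) := by
    refine Finset.sum_congr rfl fun u _ => Finset.sum_congr rfl fun y₂ _ => ?_
    rw [Finset.sum_comm]
  have gY2 : (∑ y₂, plog (∑ u, ∑ y₁, ∑ x, p u x y₁ y₂))
      = ∑ y₂, plog (∑ u, ∑ x, ∑ a, p u x a y₂) := by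
    refine Finset.sum_congr rfl fun y₂ _ => ?_
    congr 1
    exact Finset.sum_congr rfl fun u _ => Finset.sum_comm
  -- rewrite the goal through HentS and product sums
  simp only [HentS]
  simp only [Fintype.sum_prod_type]
  -- core inequality on plog-sums
  have key : (∑ x, plog (∑ u, ∑ a, ∑ b, p u x a b))
      + (∑ y₁, plog (∑ u, ∑ x, ∑ b, p u x y₁ b))
      - (∑ x, ∑ y₁, plog (∑ u, ∑ b, p u x y₁ b))
      ≤ ((∑ u, ∑ x, plog (∑ a, ∑ b, p u x a b))
        + (∑ u, ∑ y₁, plog (∑ x, ∑ b, p u x y₁ b))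
        - (∑ u, plog (∑ x, ∑ a, ∑ b, p u x a b))
        - (∑ u, ∑ x, ∑ y₁, plog (∑ b, p u x y₁ b)))
      + ((∑ u, plog (∑ x, ∑ a, ∑ b, p u x a b))
        + (∑ y₂, plog (∑ u, ∑ x, ∑ a, p u x a y₂))
        - (∑ u, ∑ y₂, plog (∑ x, ∑ a, p u x a y₂))) := by
    linarith [SA1, SA2, SB, gUY1, gY1, gUY2, gY2]
  have key2 := mul_le_mul_of_nonneg_right key (inv_pos.mpr hL).le
  simp only [div_eq_mul_inv]
  linarith [key2]
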